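/- arXiv:math/0503099 — 5 statements merged into one kernel-verified Lean document; each statement's English description precedes it below -/
import Mathlib

section
/- Let x_1, ..., x_k be distinct real numbers and α ∈ ℝ, and let C be the convex set of probability vectors p with Σ_i x_i p_i = α. A point p ∈ C is an extreme point of C if and only if p has at most two non-zero entries. -/
/-!
The constraint set is the polyhedron `{q ≥ 0 : ∑ qᵢ • (1, xᵢ) = (1, α)}`. A point `p` of a
polyhedron `{q ≥ 0 : ∑ qᵢ • vᵢ = c}` is extreme iff the columns `vᵢ` with `pᵢ ≠ 0` are linearly
independent: a dependency `g` supported on the support of `p` lets one move to `p ± ε g`, and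
conversely, if `p` lies strictly between `a` and `b`, then `a - b` vanishes off the support of `p`
and is such a dependency. Since `ℝ²` has dimension 2 and the vectors `(1, xᵢ)` are pairwise
non-proportional, such columns are independent exactly when there are at most two of them.
-/

open Filter Topology

theorem linearIndepOn_iff_of_fintype {ι R M : Type*} [Fintype ι] [Ring R] [AddCommGroup M]
    [Module R M] {v : ι → M} {s : Set ι} :
    LinearIndepOn R v s ↔ ∀ g : ι → R, (∀ i ∉ s, g i = 0) → ∑ i, g i • v i = 0 → g = 0 := by
  rw [linearIndepOn_iff]
  constructor
  · intro h g hgs hg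
    have := h (Finsupp.equivFunOnFinite.symm g) ((Finsupp.mem_supported' R _).2 hgs)
      (by simpa [Finsupp.linearCombination_apply, Finsupp.sum_fintype] using hg)
    simpa using congrArg (⇑) this
  · intro h l hls hl
    have := h l ((Finsupp.mem_supported' R l).1 hls)
      (by simpa [Finsupp.linearCombination_apply, Finsupp.sum_fintype] using hl)
    exact Finsupp.coe_eq_zero.1 this

theorem eventually_nonneg_add_smul {ι : Type*} [Finite ι] {p g : ι → ℝ} (hp : 0 ≤ p)
    (hg : ∀ i, p i = 0 → g i = 0) : ∀ᶠ ε in 𝓝 (0 : ℝ), 0 ≤ p + ε • g := by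
  simp only [Pi.le_def, Pi.add_apply, Pi.smul_apply, Pi.zero_apply, smul_eq_mul]
  refine eventually_all.2 fun i => ?_
  rcases (hp i).eq_or_lt with hpi | hpi
  · simp [← hpi, hg i hpi.symm]
  · have : Tendsto (fun ε : ℝ => p i + ε * g i) (𝓝 0) (𝓝 (p i)) :=
      (by fun_prop : Continuous fun ε : ℝ => p i + ε * g i).tendsto' 0 (p i) (by simp)
    exact (this.eventually (lt_mem_nhds hpi)).mono fun _ h => h.le

theorem apply_eq_zero_of_mem_openSegment {ι 𝕜 : Type*} [Field 𝕜] [LinearOrder 𝕜]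
    [IsStrictOrderedRing 𝕜] {a b p : ι → 𝕜} (ha : 0 ≤ a) (hb : 0 ≤ b)
    (hp : p ∈ openSegment 𝕜 a b) {i : ι} (hpi : p i = 0) : a i = 0 := by
  obtain ⟨s, t, hs, ht, -, rfl⟩ := hp
  simp only [Pi.add_apply, Pi.smul_apply, smul_eq_mul] at hpi
  have := (add_eq_zero_iff_of_nonneg (mul_nonneg hs.le (ha i)) (mul_nonneg ht.le (hb i))).1 hpi
  exact (mul_eq_zero.1 this.1).resolve_left hs.ne'

section NonnegSolutions

variable {ι E : Type*} [Fintype ι] [AddCommGroup E] [Module ℝ E]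

def nonnegSolutions (v : ι → E) (c : E) : Set (ι → ℝ) := {q | 0 ≤ q ∧ ∑ i, q i • v i = c}

theorem add_smul_mem_nonnegSolutions {v : ι → E} {c : E} {p g : ι → ℝ}
    (hp : p ∈ nonnegSolutions v c) (hg : ∑ i, g i • v i = 0) {ε : ℝ} (hε : 0 ≤ p + ε • g) :
    p + ε • g ∈ nonnegSolutions v c :=
  ⟨hε, by simp [add_smul, Finset.sum_add_distrib, mul_smul, ← Finset.smul_sum, hg, hp.2]⟩

theorem mem_extremePoints_nonnegSolutions_iff {v : ι → E} {c : E} {p : ι → ℝ}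
    (hp : p ∈ nonnegSolutions v c) :
    p ∈ (nonnegSolutions v c).extremePoints ℝ ↔ LinearIndepOn ℝ v (Function.support p) := by
  rw [linearIndepOn_iff_of_fintype]
  constructor
  · intro hext g hg hgv
    obtain ⟨δ, hδ, hball⟩ := Metric.eventually_nhds_iff.1
      (eventually_nonneg_add_smul hp.1 fun i hi => hg i (Function.notMem_support.2 hi))
    have hmem (ε : ℝ) (hε : |ε| < δ) : p + ε • g ∈ nonnegSolutions v c :=
      add_smul_mem_nonnegSolutions hp hgv (hball (by simpa using hε))
    have hδ2 : |δ / 2| < δ := by rw [abs_of_pos (half_pos hδ)]; exact half_lt_self hδ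
    have hfixed : p + (δ / 2) • g = p := hext.2 (hmem _ hδ2)
      (by simpa [sub_eq_add_neg, ← neg_smul] using hmem (-(δ / 2)) (by rwa [abs_neg]))
      (mem_openSegment_add_sub p _)
    exact (smul_eq_zero.1 (add_eq_left.1 hfixed)).resolve_left (half_pos hδ).ne'
  · intro hind
    refine ⟨hp, fun a ha b hb hpab => ?_⟩
    have hsupp : ∀ i ∉ Function.support p, (a - b) i = 0 := fun i hi => by
      have hi : p i = 0 := Function.notMem_support.1 hi
      rw [Pi.sub_apply, apply_eq_zero_of_mem_openSegment ha.1 hb.1 hpab hi,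
        apply_eq_zero_of_mem_openSegment hb.1 ha.1 (openSegment_symm ℝ a b ▸ hpab) hi, sub_self]
    have hab := hind (a - b) hsupp (by simp [sub_smul, Finset.sum_sub_distrib, ha.2, hb.2])
    rw [sub_eq_zero] at hab
    subst hab
    rw [openSegment_same] at hpab
    exact hpab.symm

end NonnegSolutions

theorem linearIndepOn_one_prodMk_iff_card_le_two {ι K : Type*} [Field K] {x : ι → K}
    (hx : Function.Injective x) {s : Finset ι} :
    LinearIndepOn K (fun i => ((1 : K), x i)) s ↔ s.card ≤ 2 := by
  classical
  constructor
  · intro h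
    simpa [Module.finrank_prod] using h.fintype_card_le_finrank
  · intro hs
    interval_cases hcard : s.card
    · simp [Finset.card_eq_zero.1 hcard]
    · obtain ⟨a, rfl⟩ := Finset.card_eq_one.1 hcard
      simp
    · obtain ⟨a, b, hab, rfl⟩ := Finset.card_eq_two.1 hcard
      rw [Finset.coe_pair, linearIndepOn_pair_iff _ hab (by simp)]
      intro t ht
      simp only [Prod.smul_mk, smul_eq_mul, mul_one, Prod.mk.injEq] at ht
      exact hab (hx (by simpa [ht.1] using ht.2))

/-- A probability vector with mean `α` is an extreme point of the convex set of
all such vectors iff it has at most two non-zero entries. -/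
theorem extreme_points_iff_two_nonzero {k : ℕ} (x : Fin (k + 1) → ℝ)
    (hx : Function.Injective x) (α : ℝ) (p : Fin (k + 1) → ℝ)
    (hp : p ∈ {p : Fin (k + 1) → ℝ |
      (∀ i, 0 ≤ p i) ∧ (∑ i, p i = 1) ∧ (∑ i, x i * p i = α)}) :
    p ∈ Set.extremePoints ℝ {p : Fin (k + 1) → ℝ |
        (∀ i, 0 ≤ p i) ∧ (∑ i, p i = 1) ∧ (∑ i, x i * p i = α)} ↔
      (Finset.univ.filter fun i => p i ≠ 0).card ≤ 2 := by
  have hC : {p : Fin (k + 1) → ℝ | (∀ i, 0 ≤ p i) ∧ (∑ i, p i = 1) ∧ (∑ i, x i * p i = α)} =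
      nonnegSolutions (fun i => ((1 : ℝ), x i)) (1, α) := by
    ext q
    simp [nonnegSolutions, Pi.le_def, Prod.ext_iff, Prod.fst_sum, Prod.snd_sum, mul_comm]
  rw [hC] at hp ⊢
  rw [mem_extremePoints_nonnegSolutions_iff hp, ← linearIndepOn_one_prodMk_iff_card_le_two hx,
    Finset.coe_filter_univ]
  rfl
end

section
/- Let Ω be a nonempty set and (f_n) a sequence of functions Ω → ℝ each with finite range. Let 𝒜_n be the algebra of subsets of Ω generated by f_1,...,f_n. If P is a finitely additive probability measure on the algebra ⋃_n 𝒜_n such that (f_n, 𝒜_n) is a martingale under P (i.e., for each n and each atom Q of 𝒜_n with P(Q) > 0, Σ_{Q' atom of 𝒜_{n+1}, Q' ⊆ Q} f_{n+1}(Q') P(Q') = f_n(Q) P(Q)), and all atoms have positive P-measure, then (f_n) is a measure free martingale: for each n and each atom Q of 𝒜_n, the value f_n(Q) lies between the minimum and maximum of the values of f_{n+1} on Q. -/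
/-- The atom of the partition generated by `f 0, ..., f n` containing `ω`. -/
def atomOf {Ω : Type*} (f : ℕ → Ω → ℝ) (n : ℕ) (ω : Ω) : Set Ω :=
  {ω' | ∀ j ≤ n, f j ω' = f j ω}

/-- The algebra `𝒜ₙ` generated by `f 0, ..., f n`: the sets that are unions of
atoms of the partition generated by `f 0, ..., f n`. -/
def algLevel {Ω : Type*} (f : ℕ → Ω → ℝ) (n : ℕ) : Set (Set Ω) :=
  {A | ∀ ω ∈ A, atomOf f n ω ⊆ A}

/-- The algebra `𝒜_∞ = ⋃ₙ 𝒜ₙ`. -/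
def algInf {Ω : Type*} (f : ℕ → Ω → ℝ) : Set (Set Ω) :=
  ⋃ n, algLevel f n

/-- `P` is a finitely additive probability measure on the algebra `𝒜`. -/
def IsFAProb {Ω : Type*} (𝒜 : Set (Set Ω)) (P : Set Ω → ℝ) : Prop :=
  (∀ A ∈ 𝒜, 0 ≤ P A) ∧ P ∅ = 0 ∧ P Set.univ = 1 ∧
    ∀ A ∈ 𝒜, ∀ B ∈ 𝒜, Disjoint A B → P (A ∪ B) = P A + P B

section helpers
variable {Ω : Type*} (f : ℕ → Ω → ℝ)

lemma atomOf_symm {n : ℕ} {ω ω' : Ω} (h : ω' ∈ atomOf f n ω) : ω ∈ atomOf f n ω' :=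
  fun j hj => (h j hj).symm

lemma atomOf_subset {n : ℕ} {ω ω' : Ω} (h : ω' ∈ atomOf f n ω) :
    atomOf f n ω' ⊆ atomOf f n ω :=
  fun x hx j hj => (hx j hj).trans (h j hj)

lemma self_mem_atomOf (n : ℕ) (ω : Ω) : ω ∈ atomOf f n ω := fun _ _ => rfl

lemma atomOf_mono {m n : ℕ} (h : m ≤ n) (ω : Ω) : atomOf f n ω ⊆ atomOf f m ω :=
  fun x hx j hj => hx j (hj.trans h)

lemma mem_algInf {n : ℕ} {A : Set Ω} (h : A ∈ algLevel f n) : A ∈ algInf f :=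
  Set.mem_iUnion.2 ⟨n, h⟩

lemma empty_mem_algLevel (n : ℕ) : (∅ : Set Ω) ∈ algLevel f n := fun _ h => h.elim

lemma iUnion_mem_algLevel {n : ℕ} {ι : Type*} {V : Finset ι} {S : ι → Set Ω}
    (h : ∀ v ∈ V, S v ∈ algLevel f n) : (⋃ v ∈ V, S v) ∈ algLevel f n := by
  intro ω hω
  simp only [Set.mem_iUnion] at hω
  obtain ⟨v, hv, hωv⟩ := hω
  exact fun x hx => Set.mem_iUnion₂.2 ⟨v, hv, h v hv ω hωv hx⟩

lemma diff_mem_algLevel {n : ℕ} {A B : Set Ω}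
    (hA : A ∈ algLevel f n) (hB : B ∈ algLevel f n) : A \ B ∈ algLevel f n := by
  rintro ω ⟨hωA, hωB⟩ x hx
  refine ⟨hA ω hωA hx, fun hxB => hωB ?_⟩
  exact hB x hxB (atomOf_symm f hx)

lemma P_mono (P : Set Ω → ℝ) (hP : IsFAProb (algInf f) P) {n : ℕ} {A B : Set Ω}
    (hA : A ∈ algLevel f n) (hB : B ∈ algLevel f n) (hAB : A ⊆ B) : P A ≤ P B := by
  have hd : B = A ∪ (B \ A) := by
    rw [Set.union_diff_cancel hAB]
  have := hP.2.2.2 A (mem_algInf f hA) (B \ A)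
    (mem_algInf f (diff_mem_algLevel f hB hA)) Set.disjoint_sdiff_right
  rw [hd, this]
  have := hP.1 (B \ A) (mem_algInf f (diff_mem_algLevel f hB hA))
  linarith

lemma P_add_finset (P : Set Ω → ℝ) (hP : IsFAProb (algInf f) P) (n : ℕ)
    {ι : Type*} [DecidableEq ι] (V : Finset ι) (S : ι → Set Ω)
    (hS : ∀ v ∈ V, S v ∈ algLevel f n)
    (hdisj : ∀ v ∈ V, ∀ w ∈ V, v ≠ w → Disjoint (S v) (S w)) :
    P (⋃ v ∈ V, S v) = ∑ v ∈ V, P (S v) := by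
  induction V using Finset.induction_on with
  | empty => simpa using hP.2.1
  | @insert a s ha ih =>
    rw [Finset.set_biUnion_insert, Finset.sum_insert ha]
    have hrest : (⋃ v ∈ s, S v) ∈ algLevel f n :=
      iUnion_mem_algLevel f (fun v hv => hS v (Finset.mem_insert_of_mem hv))
    have hdis : Disjoint (S a) (⋃ v ∈ s, S v) := by
      refine Set.disjoint_iUnion₂_right.2 fun v hv => ?_
      exact hdisj a (Finset.mem_insert_self a s) v (Finset.mem_insert_of_mem hv)
        (fun h => ha (h ▸ hv))
    rw [hP.2.2.2 (S a) (mem_algInf f (hS a (Finset.mem_insert_self a s)))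
      _ (mem_algInf f hrest) hdis,
      ih (fun v hv => hS v (Finset.mem_insert_of_mem hv))
        (fun v hv w hw => hdisj v (Finset.mem_insert_of_mem hv) w (Finset.mem_insert_of_mem hw))]

end helpers

/-- `(f, 𝒜ₙ)` is a measure free martingale: on each atom `Q` of `ℚₙ`, the
(constant) value of `f n` lies between the minimum and the maximum of
`f (n+1)` on `Q` (attained since `f (n+1)` has finite range). -/
def IsMeasureFreeMartingale {Ω : Type*} (f : ℕ → Ω → ℝ) : Prop :=
  ∀ n (ω : Ω), (∃ ω₁ ∈ atomOf f n ω, f (n + 1) ω₁ ≤ f n ω) ∧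
    (∃ ω₂ ∈ atomOf f n ω, f n ω ≤ f (n + 1) ω₂)

/-- A martingale under a finitely additive probability measure (all atoms of
positive measure) is a measure free martingale. -/
theorem martingale_is_measure_free {Ω : Type*} [Nonempty Ω] (f : ℕ → Ω → ℝ)
    (hfin : ∀ n, (Set.range (f n)).Finite) (P : Set Ω → ℝ)
    (hP : IsFAProb (algInf f) P)
    (hpos : ∀ n (ω : Ω), 0 < P (atomOf f n ω))
    (hmart : ∀ n (ω : Ω), 0 < P (atomOf f n ω) →
      ∑ v ∈ (hfin (n + 1)).toFinset,
        v * P (atomOf f n ω ∩ f (n + 1) ⁻¹' {v}) = f n ω * P (atomOf f n ω)) :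
    IsMeasureFreeMartingale f := by
  classical
  intro n ω
  set Q := atomOf f n ω with hQ
  set V := (hfin (n + 1)).toFinset with hV
  set S : ℝ → Set Ω := fun v => Q ∩ f (n + 1) ⁻¹' {v} with hSdef
  -- each S v is in the (n+1)-algebra
  have hSmem : ∀ v, S v ∈ algLevel f (n + 1) := by
    rintro v ω' ⟨hω'Q, hω'v⟩ x hx
    refine ⟨fun j hj => (hx j (hj.trans (Nat.le_succ n))).trans (hω'Q j hj), ?_⟩
    simpa [Set.mem_preimage] using (hx (n + 1) le_rfl).trans hω'v
  have hdisj : ∀ v ∈ V, ∀ w ∈ V, v ≠ w → Disjoint (S v) (S w) := by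
    intro v _ w _ hvw
    rw [Set.disjoint_left]
    rintro x ⟨_, hxv⟩ ⟨_, hxw⟩
    exact hvw ((Set.mem_singleton_iff.1 hxv).symm.trans hxw)
  have hunion : (⋃ v ∈ V, S v) = Q := by
    apply Set.Subset.antisymm
    · intro x hx
      simp only [Set.mem_iUnion] at hx
      obtain ⟨v, _, hxQ, _⟩ := hx
      exact hxQ
    · intro x hxQ
      refine Set.mem_iUnion₂.2 ⟨f (n + 1) x, ?_, hxQ, rfl⟩
      simp [hV]
  have hsum : ∑ v ∈ V, P (S v) = P Q := by
    rw [← P_add_finset f P hP (n + 1) V S (fun v _ => hSmem v) hdisj, hunion]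
  -- positivity of P (S (f (n+1) x)) for x ∈ Q
  have hSpos : ∀ x ∈ Q, 0 < P (S (f (n + 1) x)) := by
    intro x hxQ
    have hsub : atomOf f (n + 1) x ⊆ S (f (n + 1) x) := by
      intro y hy
      refine ⟨(atomOf_subset f hxQ) ((atomOf_mono f (Nat.le_succ n) x) hy), ?_⟩
      exact hy (n + 1) le_rfl
    have hatom : atomOf f (n + 1) x ∈ algLevel f (n + 1) :=
      fun ω' hω' => atomOf_subset f hω'
    exact lt_of_lt_of_le (hpos (n + 1) x)
      (P_mono f P hP hatom (hSmem _) hsub)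
  have hmemV : ∀ x : Ω, f (n + 1) x ∈ V := by
    intro x; simp [hV]
  have key := hmart n ω (hpos n ω)
  -- nonneg of P (S v)
  have hSnn : ∀ v, 0 ≤ P (S v) := fun v => hP.1 _ (mem_algInf f (hSmem v))
  constructor
  · by_contra hc
    push_neg at hc
    have hlt : f n ω * P Q < ∑ v ∈ V, v * P (S v) := by
      calc f n ω * P Q = ∑ v ∈ V, f n ω * P (S v) := by
            rw [← Finset.mul_sum, hsum]
        _ < ∑ v ∈ V, v * P (S v) := by
            apply Finset.sum_lt_sum
            · intro v _
              rcases Set.eq_empty_or_nonempty (S v) with he | ⟨x, hxQ, hxv⟩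
              · rw [he, hP.2.1]; simp
              · have : f n ω < v := hxv ▸ hc x hxQ
                exact mul_le_mul_of_nonneg_right this.le (hSnn v)
            · refine ⟨f (n + 1) ω, hmemV ω, ?_⟩
              exact mul_lt_mul_of_pos_right (hc ω (self_mem_atomOf f n ω))
                (hSpos ω (self_mem_atomOf f n ω))
    rw [key] at hlt
    exact lt_irrefl _ hlt
  · by_contra hc
    push_neg at hc
    have hlt : ∑ v ∈ V, v * P (S v) < f n ω * P Q := by
      calc ∑ v ∈ V, v * P (S v) < ∑ v ∈ V, f n ω * P (S v) := by
            apply Finset.sum_lt_sum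
            · intro v _
              rcases Set.eq_empty_or_nonempty (S v) with he | ⟨x, hxQ, hxv⟩
              · rw [he, hP.2.1]; simp
              · have : v < f n ω := hxv ▸ hc x hxQ
                exact mul_le_mul_of_nonneg_right this.le (hSnn v)
            · refine ⟨f (n + 1) ω, hmemV ω, ?_⟩
              exact mul_lt_mul_of_pos_right (hc ω (self_mem_atomOf f n ω))
                (hSpos ω (self_mem_atomOf f n ω))
        _ = f n ω * P Q := by rw [← Finset.mul_sum, hsum]
    rw [key] at hlt
    exact lt_irrefl _ hlt
end

section
/- Let Ω be a nonempty set and (f_n) a measure free martingale: each f_n has finite range, and for each n and each atom Q of the partition ℚ_n generated by f_1,...,f_n, the value f_n on Q lies between the minimum and maximum values of f_{n+1} on Q. Then there exists a sequence of probability measures P_n on the algebra 𝒜_n generated by f_1,...,f_n such that P_{n+1} restricted to 𝒜_n equals P_n and the conditional expectation E_{P_{n+1}}[f_{n+1} | 𝒜_n] = f_n for all n. -/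
/-!
Each atom `Q` of `ℚₙ` contains points `ω₁, ω₂` with `f (n+1) ω₁ ≤ f n ≤ f (n+1) ω₂` on `Q`, so
some probability weight on `{ω₁, ω₂} ⊆ Q` has `f (n+1)`-mean `f n`. Using these weights as the
transition probabilities of a Markov chain started at any point, let `Pₙ` be the law of the chain
at time `n`. A step never leaves the current atom of `ℚₙ`, so `P (n+1)` agrees with `Pₙ` on `𝒜ₙ`,
and the mean condition on each step is exactly `E[f (n+1) ∣ 𝒜ₙ] = f n`.
-/

open Finsupp

section Atoms

variable {Ω : Type*} {f : ℕ → Ω → ℝ} {n : ℕ}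

lemma mem_atomOf_comm {ω ω' : Ω} (h : ω' ∈ atomOf f n ω) : ω ∈ atomOf f n ω' :=
  fun j hj => (h j hj).symm

lemma atomOf_mem_algLevel (f : ℕ → Ω → ℝ) (n : ℕ) (ω : Ω) : atomOf f n ω ∈ algLevel f n :=
  fun _ hx _ hy j hj => (hy j hj).trans (hx j hj)

lemma disjoint_atomOf_of_notMem {A : Set Ω} (hA : A ∈ algLevel f n) {ω : Ω} (hω : ω ∉ A) :
    Disjoint (atomOf f n ω) A :=
  Set.disjoint_left.mpr fun _ hy hyA => hω (hA _ hyA (mem_atomOf_comm hy))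

end Atoms

namespace Finsupp

section LinearCombination

variable {α R M : Type*}

section Semiring

variable [Semiring R] [AddCommMonoid M] [Module R M]

lemma linearCombination_congr {φ ψ : α → M} {w : α →₀ R}
    (h : ∀ x ∈ w.support, φ x = ψ x) : linearCombination R φ w = linearCombination R ψ w := by
  simp only [linearCombination_apply]
  exact Finsupp.sum_congr fun x hx => by rw [h x hx]

lemma linearCombination_indicator_of_support_subset {A : Set α} {w : α →₀ R}
    (h : ↑w.support ⊆ A) (φ : α → M) :
    linearCombination R (A.indicator φ) w = linearCombination R φ w :=
  linearCombination_congr fun _ hx => Set.indicator_of_mem (h hx) φ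

lemma linearCombination_indicator_of_disjoint {A : Set α} {w : α →₀ R}
    (h : Disjoint (↑w.support) A) (φ : α → M) :
    linearCombination R (A.indicator φ) w = 0 := by
  rw [← linearCombination_zero_apply R w]
  exact linearCombination_congr fun _ hx =>
    Set.indicator_of_notMem (Set.disjoint_left.mp h hx) φ

end Semiring

section CommSemiring

variable [CommSemiring R] [AddCommMonoid M] [Module R M]

lemma linearCombination_add_left (φ ψ : α → M) (w : α →₀ R) :
    linearCombination R (φ + ψ) w = linearCombination R φ w + linearCombination R ψ w := by
  change bilinearCombination R R (φ + ψ) w = _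
  rw [map_add, LinearMap.add_apply]
  rfl

lemma linearCombination_smul_left (c : R) (φ : α → M) (w : α →₀ R) :
    linearCombination R (c • φ) w = c • linearCombination R φ w := by
  change bilinearCombination R R (c • φ) w = _
  simp

lemma linearCombination_sum_smul_left {ι : Type*} (s : Finset ι) (c : ι → R) (φ : ι → α → M)
    (w : α →₀ R) :
    linearCombination R (∑ i ∈ s, c i • φ i) w = ∑ i ∈ s, c i • linearCombination R (φ i) w := by
  change bilinearCombination R R (∑ i ∈ s, c i • φ i) w = _
  simp

end CommSemiring

end LinearCombination

section Mass

variable {α : Type*}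

lemma linearCombination_nonneg {w : α →₀ ℝ} {φ : α → ℝ} (hw : ∀ x, 0 ≤ w x)
    (hφ : ∀ x, 0 ≤ φ x) : 0 ≤ linearCombination ℝ φ w :=
  Finsupp.sum_nonneg fun x _ => mul_nonneg (hw x) (hφ x)

lemma linearCombination_linearCombination_nonneg {w : α →₀ ℝ} {κ : α → α →₀ ℝ}
    (hw : ∀ x, 0 ≤ w x) (hκ : ∀ x y, 0 ≤ κ x y) (y : α) :
    0 ≤ linearCombination ℝ κ w y := by
  rw [linearCombination_apply, Finsupp.sum_apply]
  exact Finsupp.sum_nonneg fun x _ => mul_nonneg (hw x) (hκ x y)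

/-- Finitely supported weights play the role of finitely additive measures: `w` integrates `φ`
as `linearCombination ℝ φ w`. -/
noncomputable def mass (w : α →₀ ℝ) (A : Set α) : ℝ :=
  linearCombination ℝ (A.indicator (1 : α → ℝ)) w

lemma isFAProb_mass {w : α →₀ ℝ} (hw : ∀ x, 0 ≤ w x) (h1 : linearCombination ℝ (1 : α → ℝ) w = 1)
    (𝒜 : Set (Set α)) : IsFAProb 𝒜 (mass w) := by
  refine ⟨fun A _ => linearCombination_nonneg hw (Set.indicator_nonneg fun _ _ => zero_le_one),
    by rw [mass, Set.indicator_empty]; exact linearCombination_zero_apply ℝ w,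
    by simpa [mass] using h1, fun A _ B _ hAB => ?_⟩
  rw [mass, Set.indicator_union_of_disjoint hAB, ← Pi.add_def, linearCombination_add_left]
  rfl

lemma linearCombination_indicator_const (w : α →₀ ℝ) (A : Set α) (c : ℝ) :
    linearCombination ℝ (A.indicator fun _ => c) w = c * mass w A := by
  have hc : A.indicator (fun _ => c) = c • A.indicator 1 := by
    ext x
    by_cases hx : x ∈ A <;> simp [hx]
  rw [mass, hc, linearCombination_smul_left, smul_eq_mul]

lemma sum_mul_mass_inter_preimage (w : α →₀ ℝ) (S : Set α) {g : α → ℝ} {V : Finset ℝ}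
    (hV : ∀ x, g x ∈ V) :
    ∑ v ∈ V, v * mass w (S ∩ g ⁻¹' {v}) = linearCombination ℝ (S.indicator g) w := by
  simp only [mass, ← smul_eq_mul, ← linearCombination_sum_smul_left]
  refine congrArg (linearCombination ℝ · w) (funext fun x => ?_)
  classical
  rw [Finset.sum_apply]
  by_cases hx : x ∈ S <;> simp [Set.indicator_apply, hx, hV x]

lemma exists_linearCombination_eq_of_le_of_le {g : α → ℝ} {x₁ x₂ : α} {c : ℝ}
    (h₁ : g x₁ ≤ c) (h₂ : c ≤ g x₂) :
    ∃ w : α →₀ ℝ, (∀ y, 0 ≤ w y) ∧ ↑w.support ⊆ ({x₁, x₂} : Set α) ∧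
      linearCombination ℝ (1 : α → ℝ) w = 1 ∧ linearCombination ℝ g w = c := by
  classical
  obtain ⟨a, b, ha, hb, hab, hc⟩ : c ∈ segment ℝ (g x₁) (g x₂) := by
    rw [segment_eq_Icc (h₁.trans h₂)]
    exact ⟨h₁, h₂⟩
  refine ⟨single x₁ a + single x₂ b, fun y => ?_, ?_, ?_, ?_⟩
  · rw [Finsupp.add_apply, single_apply, single_apply]
    split_ifs <;> positivity
  · intro y hy
    rcases Finset.mem_union.mp (support_add hy) with h | h
    · exact Or.inl (Finset.mem_singleton.mp (support_single_subset h))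
    · exact Or.inr (Finset.mem_singleton.mp (support_single_subset h))
  · simpa using hab
  · simpa using hc

end Mass

end Finsupp

section MarkovLaw

variable {α : Type*}

noncomputable def markovLaw (κ : ℕ → α → α →₀ ℝ) (x₀ : α) : ℕ → α →₀ ℝ
  | 0 => single x₀ 1
  | n + 1 => linearCombination ℝ (κ n) (markovLaw κ x₀ n)

variable {κ : ℕ → α → α →₀ ℝ} {x₀ : α}

lemma markovLaw_nonneg (hκ : ∀ n x y, 0 ≤ κ n x y) : ∀ n y, 0 ≤ markovLaw κ x₀ n y
  | 0, y => by
    classical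
    rw [markovLaw, single_apply]
    split_ifs <;> norm_num
  | n + 1, y => linearCombination_linearCombination_nonneg (markovLaw_nonneg hκ n) (hκ n) y

lemma linearCombination_one_markovLaw (hκ : ∀ n x, linearCombination ℝ (1 : α → ℝ) (κ n x) = 1) :
    ∀ n, linearCombination ℝ (1 : α → ℝ) (markovLaw κ x₀ n) = 1
  | 0 => by simp [markovLaw]
  | n + 1 => by
    rw [markovLaw, linearCombination_linearCombination, funext (hκ n)]
    exact linearCombination_one_markovLaw hκ n

end MarkovLaw

section Kernel

variable {Ω : Type*}

/-- `κ n x` is the law of the position at time `n + 1` of a chain that is at `x` at time `n`. -/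
structure IsMartingaleKernel (f : ℕ → Ω → ℝ) (κ : ℕ → Ω → Ω →₀ ℝ) : Prop where
  nonneg : ∀ n x y, 0 ≤ κ n x y
  support_subset : ∀ n x, ↑(κ n x).support ⊆ atomOf f n x
  linearCombination_one : ∀ n x, linearCombination ℝ (1 : Ω → ℝ) (κ n x) = 1
  linearCombination_succ : ∀ n x, linearCombination ℝ (f (n + 1)) (κ n x) = f n x

lemma IsMeasureFreeMartingale.exists_isMartingaleKernel {f : ℕ → Ω → ℝ}
    (hf : IsMeasureFreeMartingale f) : ∃ κ, IsMartingaleKernel f κ := by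
  have hstep : ∀ n x, ∃ w : Ω →₀ ℝ, (∀ y, 0 ≤ w y) ∧ ↑w.support ⊆ atomOf f n x ∧
      linearCombination ℝ (1 : Ω → ℝ) w = 1 ∧ linearCombination ℝ (f (n + 1)) w = f n x := by
    intro n x
    obtain ⟨⟨x₁, hx₁, h₁⟩, ⟨x₂, hx₂, h₂⟩⟩ := hf n x
    obtain ⟨w, hw, hsupp, h1, hmean⟩ := exists_linearCombination_eq_of_le_of_le h₁ h₂
    exact ⟨w, hw, hsupp.trans (Set.insert_subset hx₁ (Set.singleton_subset_iff.mpr hx₂)), h1,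
      hmean⟩
  choose κ hnonneg hsupport hone hmean using hstep
  exact ⟨κ, ⟨hnonneg, hsupport, hone, hmean⟩⟩

namespace IsMartingaleKernel

variable {f : ℕ → Ω → ℝ} {κ : ℕ → Ω → Ω →₀ ℝ} {n : ℕ} {A : Set Ω}

lemma linearCombination_indicator (hκ : IsMartingaleKernel f κ) (hA : A ∈ algLevel f n)
    (ψ : Ω → ℝ) (x : Ω) :
    linearCombination ℝ (A.indicator ψ) (κ n x) =
      A.indicator (fun y => linearCombination ℝ ψ (κ n y)) x := by
  by_cases hx : x ∈ A
  · rw [Set.indicator_of_mem hx]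
    exact linearCombination_indicator_of_support_subset
      ((hκ.support_subset n x).trans (hA x hx)) ψ
  · rw [Set.indicator_of_notMem hx]
    exact linearCombination_indicator_of_disjoint
      ((disjoint_atomOf_of_notMem hA hx).mono_left (hκ.support_subset n x)) ψ

lemma linearCombination_indicator_markovLaw_succ (hκ : IsMartingaleKernel f κ)
    (hA : A ∈ algLevel f n) (ψ : Ω → ℝ) (x₀ : Ω) :
    linearCombination ℝ (A.indicator ψ) (markovLaw κ x₀ (n + 1)) =
      linearCombination ℝ (A.indicator fun y => linearCombination ℝ ψ (κ n y))
        (markovLaw κ x₀ n) := by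
  rw [markovLaw, linearCombination_linearCombination]
  exact congrArg (linearCombination ℝ · _) (funext (hκ.linearCombination_indicator hA ψ))

lemma mass_markovLaw_succ (hκ : IsMartingaleKernel f κ) (hA : A ∈ algLevel f n) (x₀ : Ω) :
    mass (markovLaw κ x₀ (n + 1)) A = mass (markovLaw κ x₀ n) A := by
  rw [mass, hκ.linearCombination_indicator_markovLaw_succ hA, funext (hκ.linearCombination_one n)]
  rfl

lemma linearCombination_indicator_succ_markovLaw_succ (hκ : IsMartingaleKernel f κ)
    (hA : A ∈ algLevel f n) (x₀ : Ω) :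
    linearCombination ℝ (A.indicator (f (n + 1))) (markovLaw κ x₀ (n + 1)) =
      linearCombination ℝ (A.indicator (f n)) (markovLaw κ x₀ n) := by
  rw [hκ.linearCombination_indicator_markovLaw_succ hA, funext (hκ.linearCombination_succ n)]

end IsMartingaleKernel

end Kernel

/-- A measure free martingale admits a consistent sequence of finitely additive
probability measures `Pₙ` on `𝒜ₙ` under which it is a martingale, i.e.
`P (n+1)` restricts to `P n` on `𝒜ₙ` and `E_{P (n+1)}[f (n+1) ∣ 𝒜ₙ] = f n`. -/
theorem measure_free_martingale_measures_exist {Ω : Type*} [Nonempty Ω]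
    (f : ℕ → Ω → ℝ) (hfin : ∀ n, (Set.range (f n)).Finite)
    (hmfm : IsMeasureFreeMartingale f) :
    ∃ P : ℕ → Set Ω → ℝ,
      (∀ n, IsFAProb (algLevel f n) (P n)) ∧
      (∀ n, ∀ A ∈ algLevel f n, P (n + 1) A = P n A) ∧
      (∀ n (ω : Ω), ∑ v ∈ (hfin (n + 1)).toFinset,
        v * P (n + 1) (atomOf f n ω ∩ f (n + 1) ⁻¹' {v}) =
          f n ω * P (n + 1) (atomOf f n ω)) := by
  obtain ⟨ω₀⟩ := ‹Nonempty Ω›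
  obtain ⟨κ, hκ⟩ := hmfm.exists_isMartingaleKernel
  refine ⟨fun n => mass (markovLaw κ ω₀ n), fun n => isFAProb_mass
    (markovLaw_nonneg hκ.nonneg n) (linearCombination_one_markovLaw hκ.linearCombination_one n) _,
    fun n A hA => hκ.mass_markovLaw_succ hA ω₀, fun n ω => ?_⟩
  have hatom := atomOf_mem_algLevel f n ω
  calc ∑ v ∈ (hfin (n + 1)).toFinset,
        v * mass (markovLaw κ ω₀ (n + 1)) (atomOf f n ω ∩ f (n + 1) ⁻¹' {v})
      = linearCombination ℝ ((atomOf f n ω).indicator (f (n + 1))) (markovLaw κ ω₀ (n + 1)) :=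
        sum_mul_mass_inter_preimage _ _ fun x => (hfin (n + 1)).mem_toFinset.mpr ⟨x, rfl⟩
    _ = linearCombination ℝ ((atomOf f n ω).indicator (f n)) (markovLaw κ ω₀ n) :=
        hκ.linearCombination_indicator_succ_markovLaw_succ hatom ω₀
    _ = linearCombination ℝ ((atomOf f n ω).indicator fun _ => f n ω) (markovLaw κ ω₀ n) := by
        rw [Set.indicator_congr fun x (hx : x ∈ atomOf f n ω) => hx n le_rfl]
    _ = f n ω * mass (markovLaw κ ω₀ (n + 1)) (atomOf f n ω) := by
        rw [linearCombination_indicator_const, hκ.mass_markovLaw_succ hatom]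
end

section
/- Let (f_n) be a measure free martingale on Ω such that for every n and every atom Q of ℚ_n, the partition of Q induced by ℚ_{n+1} has at most two elements. Fix a probability measure P_1 on 𝒜_1 with all atoms of positive measure, and assume f_{n+1} takes two distinct values on any atom split into two. Then there is a unique finitely additive probability measure P on 𝒜_∞ extending P_1 under which (f_n, 𝒜_n) is a martingale. -/
namespace MFM
variable {Ω : Type*} (f : ℕ → Ω → ℝ)

lemma mem_atomOf_self (n : ℕ) (ω : Ω) : ω ∈ atomOf f n ω := fun _ _ => rfl

variable {f} in
lemma atomOf_eq_of_mem {n : ℕ} {ω ω' : Ω} (h : ω' ∈ atomOf f n ω) :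
    atomOf f n ω' = atomOf f n ω := by
  ext x
  constructor <;> intro hx j hj
  · rw [hx j hj, h j hj]
  · rw [hx j hj, ← h j hj]

lemma atomOf_succ_subset (n : ℕ) (ω : Ω) : atomOf f (n + 1) ω ⊆ atomOf f n ω :=
  fun _ h j hj => h j (hj.trans (Nat.le_succ n))

lemma atomOf_subset_of_le {n m : ℕ} (h : n ≤ m) (ω : Ω) :
    atomOf f m ω ⊆ atomOf f n ω :=
  fun _ hx j hj => hx j (hj.trans h)

lemma atomOf_mem_algLevel (n : ℕ) (ω : Ω) : atomOf f n ω ∈ algLevel f n :=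
  fun _ h _ hx => (atomOf_eq_of_mem h) ▸ hx

lemma algLevel_mono {n m : ℕ} (h : n ≤ m) : algLevel f n ⊆ algLevel f m :=
  fun _ hA ω hω => (hA ω hω).trans' (atomOf_subset_of_le f h ω) |>.trans (le_refl _)

lemma empty_mem_algLevel (n : ℕ) : (∅ : Set Ω) ∈ algLevel f n := fun _ h => h.elim

lemma univ_mem_algLevel (n : ℕ) : (Set.univ : Set Ω) ∈ algLevel f n :=
  fun _ _ => Set.subset_univ _

lemma union_mem_algLevel {n : ℕ} {A B : Set Ω} (hA : A ∈ algLevel f n)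
    (hB : B ∈ algLevel f n) : A ∪ B ∈ algLevel f n := by
  intro ω hω
  rcases hω with h | h
  · exact (hA ω h).trans Set.subset_union_left
  · exact (hB ω h).trans Set.subset_union_right

lemma diff_mem_algLevel {n : ℕ} {A B : Set Ω} (hA : A ∈ algLevel f n)
    (hB : B ∈ algLevel f n) : A \ B ∈ algLevel f n := by
  intro ω hω x hx
  refine ⟨hA ω hω.1 hx, fun hxB => hω.2 ?_⟩
  have : ω ∈ atomOf f n x := (atomOf_eq_of_mem hx) ▸ mem_atomOf_self f n ω
  exact hB x hxB this

end MFM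

namespace MFM
variable {Ω : Type*} [Nonempty Ω] {f : ℕ → Ω → ℝ}

lemma atomOf_eq_preimage (n : ℕ) (ω : Ω) :
    atomOf f n ω = (fun ω' (j : Fin (n + 1)) => f j ω') ⁻¹'
      {fun j : Fin (n + 1) => f j ω} := by
  ext x
  simp only [Set.mem_preimage, Set.mem_singleton_iff, funext_iff]
  constructor
  · intro h j; exact h j (Nat.lt_succ_iff.mp j.isLt)
  · intro h j hj; exact h ⟨j, Nat.lt_succ_iff.mpr hj⟩

lemma atoms_finite (hfin : ∀ n, (Set.range (f n)).Finite) (n : ℕ) :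
    (Set.range (atomOf f n)).Finite := by
  have h1 : (Set.range (fun ω (j : Fin (n + 1)) => f j ω)).Finite := by
    apply Set.Finite.subset (Set.Finite.pi (fun j : Fin (n+1) => hfin j))
    rintro _ ⟨ω, rfl⟩
    exact fun j _ => ⟨ω, rfl⟩
  have : Set.range (atomOf f n) =
      (fun y => (fun ω' (j : Fin (n + 1)) => f j ω') ⁻¹' {y}) ''
        Set.range (fun ω (j : Fin (n + 1)) => f j ω) := by
    ext A
    constructor
    · rintro ⟨ω, rfl⟩
      exact ⟨_, ⟨ω, rfl⟩, (atomOf_eq_preimage n ω).symm⟩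
    · rintro ⟨_, ⟨ω, rfl⟩, rfl⟩
      exact ⟨ω, atomOf_eq_preimage n ω⟩
  rw [this]
  exact h1.image _

variable (f) in
/-- A canonical representative of the atom of `ω` at level `n`. -/
noncomputable def rep (n : ℕ) (ω : Ω) : Ω :=
  Function.invFun (atomOf f n) (atomOf f n ω)

lemma atomOf_rep (n : ℕ) (ω : Ω) : atomOf f n (rep f n ω) = atomOf f n ω :=
  Function.invFun_eq ⟨ω, rfl⟩

lemma rep_mem_atomOf (n : ℕ) (ω : Ω) : rep f n ω ∈ atomOf f n ω := by
  rw [← atomOf_rep (f := f) n ω]; exact mem_atomOf_self f n _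

lemma rep_congr {n : ℕ} {ω ω' : Ω} (h : ω' ∈ atomOf f n ω) :
    rep f n ω' = rep f n ω := by
  unfold rep; rw [atomOf_eq_of_mem h]

variable (f) in
/-- The finite set of representatives of atoms at level `n`. -/
noncomputable def reps (hfin : ∀ n, (Set.range (f n)).Finite) (n : ℕ) : Finset Ω :=
  letI := Classical.decEq Ω
  (atoms_finite hfin n).toFinset.image (Function.invFun (atomOf f n))

lemma rep_mem_reps (hfin : ∀ n, (Set.range (f n)).Finite) (n : ℕ) (ω : Ω) :
    rep f n ω ∈ reps f hfin n := by
  classical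
  unfold reps
  rw [Finset.mem_image]
  exact ⟨atomOf f n ω, by simp only [Set.Finite.mem_toFinset]; exact ⟨ω, rfl⟩, rfl⟩

lemma rep_eq_of_mem_reps {hfin : ∀ n, (Set.range (f n)).Finite} {n : ℕ} {r : Ω}
    (h : r ∈ reps f hfin n) : rep f n r = r := by
  classical
  unfold reps at h
  rw [Finset.mem_image] at h
  obtain ⟨A, hA, rfl⟩ := h
  rw [Set.Finite.mem_toFinset] at hA
  obtain ⟨ω, rfl⟩ := hA
  unfold rep
  rw [Function.invFun_eq (⟨ω, rfl⟩ : ∃ x, atomOf f n x = atomOf f n ω)]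

lemma reps_inj {hfin : ∀ n, (Set.range (f n)).Finite} {n : ℕ} {r r' : Ω}
    (hr : r ∈ reps f hfin n) (hr' : r' ∈ reps f hfin n)
    (h : r' ∈ atomOf f n r) : r = r' := by
  rw [← rep_eq_of_mem_reps hr, ← rep_eq_of_mem_reps hr', rep_congr h]

end MFM

namespace MFM
variable {Ω : Type*} [Nonempty Ω] {f : ℕ → Ω → ℝ}

variable (f) in
/-- The atom of `ω` at level `n` splits at level `n+1`. -/
def Split (n : ℕ) (ω : Ω) : Prop :=
  ∃ ω' ∈ atomOf f n ω, f (n + 1) ω' ≠ f (n + 1) ω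

/-- In the split case, `f (n+1)` takes exactly the two values
`f (n+1) ω` and `f (n+1) h.choose` on the atom. -/
lemma two_values (htwo : ∀ n (ω : Ω), ∃ v₁ v₂ : ℝ, ∀ ω' ∈ atomOf f n ω,
      f (n + 1) ω' = v₁ ∨ f (n + 1) ω' = v₂)
    {n : ℕ} {ω : Ω} (h : Split f n ω) :
    ∀ ω'' ∈ atomOf f n ω, f (n + 1) ω'' = f (n + 1) ω ∨
      f (n + 1) ω'' = f (n + 1) h.choose := by
  obtain ⟨v₁, v₂, hv⟩ := htwo n ω
  have h1 := hv ω (mem_atomOf_self f n ω)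
  have h2 := hv h.choose h.choose_spec.1
  have hne := h.choose_spec.2
  intro ω'' hω''
  have h3 := hv ω'' hω''
  rcases h1 with h1 | h1 <;> rcases h2 with h2 | h2 <;> rcases h3 with h3 | h3 <;>
    simp_all <;> tauto

lemma split_choose_ne {n : ℕ} {ω : Ω} (h : Split f n ω) :
    f (n + 1) h.choose ≠ f (n + 1) ω := h.choose_spec.2

open Classical in
variable (f) in
/-- Auxiliary conditional weight. -/
noncomputable def wAux (n : ℕ) (S : Set Ω) (c v : ℝ) : ℝ :=
  if h : ∃ ω' ∈ S, f (n + 1) ω' ≠ v then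
    (c - f (n + 1) h.choose) / (v - f (n + 1) h.choose) else 1

variable (f) in
/-- The measure of the atom of `ω` at level `n`. -/
noncomputable def pAtom (P₁ : Set Ω → ℝ) : ℕ → Ω → ℝ
  | 0, ω => P₁ (atomOf f 0 ω)
  | (n + 1), ω => pAtom P₁ n ω * wAux f n (atomOf f n ω) (f n ω) (f (n + 1) ω)

lemma pAtom_congr (P₁ : Set Ω → ℝ) {n : ℕ} {ω ω' : Ω} (h : ω' ∈ atomOf f n ω) :
    pAtom f P₁ n ω' = pAtom f P₁ n ω := by
  induction n with
  | zero => simp only [pAtom, atomOf_eq_of_mem h]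
  | succ n ih =>
    have h0 : ω' ∈ atomOf f n ω := atomOf_succ_subset f n ω h
    simp only [pAtom, ih h0, atomOf_eq_of_mem h0, h n (Nat.le_succ n),
      h (n+1) le_rfl]

lemma pAtom_of_not_split (P₁ : Set Ω → ℝ) {n : ℕ} {ω : Ω} (h : ¬ Split f n ω) :
    pAtom f P₁ (n + 1) ω = pAtom f P₁ n ω := by
  have h' : ¬ ∃ ω' ∈ atomOf f n ω, f (n + 1) ω' ≠ f (n + 1) ω := h
  simp only [pAtom, wAux]
  rw [dif_neg h', mul_one]

lemma pAtom_of_split (P₁ : Set Ω → ℝ) {n : ℕ} {ω : Ω} (h : Split f n ω) :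
    pAtom f P₁ (n + 1) ω = pAtom f P₁ n ω *
      ((f n ω - f (n + 1) h.choose) / (f (n + 1) ω - f (n + 1) h.choose)) := by
  have h' : ∃ ω' ∈ atomOf f n ω, f (n + 1) ω' ≠ f (n + 1) ω := h
  simp only [pAtom, wAux]
  rw [dif_pos h']

lemma pAtom_choose_of_split
    (htwo : ∀ n (ω : Ω), ∃ v₁ v₂ : ℝ, ∀ ω' ∈ atomOf f n ω,
      f (n + 1) ω' = v₁ ∨ f (n + 1) ω' = v₂)
    (P₁ : Set Ω → ℝ) {n : ℕ} {ω : Ω} (h : Split f n ω) :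
    pAtom f P₁ (n + 1) h.choose = pAtom f P₁ n ω *
      ((f n ω - f (n + 1) ω) / (f (n + 1) h.choose - f (n + 1) ω)) := by
  have hmem : h.choose ∈ atomOf f n ω := h.choose_spec.1
  have hatom : atomOf f n h.choose = atomOf f n ω := atomOf_eq_of_mem hmem
  have hfn : f n h.choose = f n ω := hmem n le_rfl
  have h2 : Split f n h.choose := by
    refine ⟨ω, ?_, fun hc => h.choose_spec.2 hc.symm⟩
    rw [hatom]; exact mem_atomOf_self f n ω
  rw [pAtom, wAux]
  have h2' : ∃ ω' ∈ atomOf f n h.choose, f (n + 1) ω' ≠ f (n + 1) h.choose := h2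
  rw [dif_pos h2', pAtom_congr P₁ hmem, hfn]
  have hval : f (n + 1) h2'.choose = f (n + 1) ω := by
    have hm := h2'.choose_spec.1
    have hm2 : h2'.choose ∈ atomOf f n ω := fun j hj => (hm j hj).trans (hmem j hj)
    rcases two_values htwo h _ hm2 with hv | hv
    · exact hv
    · exact absurd hv h2'.choose_spec.2
  rw [hval]

lemma wAux_nonneg (hmfm : IsMeasureFreeMartingale f)
    (htwo : ∀ n (ω : Ω), ∃ v₁ v₂ : ℝ, ∀ ω' ∈ atomOf f n ω,
      f (n + 1) ω' = v₁ ∨ f (n + 1) ω' = v₂) (n : ℕ) (ω : Ω) :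
    0 ≤ wAux f n (atomOf f n ω) (f n ω) (f (n + 1) ω) := by
  rw [wAux]
  split_ifs with h
  · set v := f (n + 1) ω with hv
    set c := f n ω with hc
    set u := f (n + 1) h.choose with hu
    have hne : u ≠ v := h.choose_spec.2
    obtain ⟨⟨ω₁, hω₁, hle⟩, ⟨ω₂, hω₂, hge⟩⟩ := hmfm n ω
    have htv : Split f n ω := h
    have hv1 := two_values htwo htv ω₁ hω₁
    have hv2 := two_values htwo htv ω₂ hω₂
    rcases lt_or_gt_of_ne hne with hlt | hlt
    · -- u < v : need u ≤ c
      have hcu : u ≤ c := by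
        rcases hv1 with h1 | h1
        · rw [h1] at hle; linarith
        · rw [h1] at hle; linarith
      apply div_nonneg <;> linarith
    · -- v < u : need c ≤ u
      have hcu : c ≤ u := by
        rcases hv2 with h1 | h1
        · rw [h1] at hge; linarith
        · rw [h1] at hge; linarith
      rw [← neg_div_neg_eq]
      apply div_nonneg <;> linarith
  · exact zero_le_one

lemma pAtom_nonneg (hmfm : IsMeasureFreeMartingale f)
    (htwo : ∀ n (ω : Ω), ∃ v₁ v₂ : ℝ, ∀ ω' ∈ atomOf f n ω,
      f (n + 1) ω' = v₁ ∨ f (n + 1) ω' = v₂)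
    {P₁ : Set Ω → ℝ} (hP₁ : ∀ A ∈ algLevel f 0, 0 ≤ P₁ A) (n : ℕ) (ω : Ω) :
    0 ≤ pAtom f P₁ n ω := by
  induction n with
  | zero => exact hP₁ _ (atomOf_mem_algLevel f 0 ω)
  | succ n ih => exact mul_nonneg ih (wAux_nonneg hmfm htwo n ω)

end MFM

namespace MFM
variable {Ω : Type*} [Nonempty Ω] {f : ℕ → Ω → ℝ}
  {hfin : ∀ n, (Set.range (f n)).Finite} {P₁ : Set Ω → ℝ}

lemma reps_eq_rep {m : ℕ} {r ω : Ω} (hr : r ∈ reps f hfin m)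
    (h : r ∈ atomOf f m ω) : r = rep f m ω := by
  rw [← rep_eq_of_mem_reps hr, rep_congr h]

lemma mem_atomOf_succ {n : ℕ} {ω ω' : Ω} (h1 : ω' ∈ atomOf f n ω)
    (h2 : f (n + 1) ω' = f (n + 1) ω) : ω' ∈ atomOf f (n + 1) ω := by
  intro j hj
  by_cases hj' : j ≤ n
  · exact h1 j hj'
  · have : j = n + 1 := by omega
    subst this; exact h2

lemma f_rep_succ (n : ℕ) (ω : Ω) : f (n + 1) (rep f (n + 1) ω) = f (n + 1) ω :=
  rep_mem_atomOf (n + 1) ω (n + 1) le_rfl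

open Classical in
variable (f) in
/-- The level-`n` approximation of the measure. -/
noncomputable def Plevel (hfin : ∀ n, (Set.range (f n)).Finite)
    (P₁ : Set Ω → ℝ) (n : ℕ) (A : Set Ω) : ℝ :=
  ∑ r ∈ (reps f hfin n).filter (· ∈ A), pAtom f P₁ n r

open Classical in
lemma filter_atomOf_eq (m : ℕ) (ω : Ω) :
    (reps f hfin m).filter (· ∈ atomOf f m ω) = {rep f m ω} := by
  ext r
  simp only [Finset.mem_filter, Finset.mem_singleton]
  constructor
  · rintro ⟨hr, hmem⟩
    exact reps_eq_rep hr hmem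
  · rintro rfl
    exact ⟨rep_mem_reps hfin m ω, rep_mem_atomOf m ω⟩

lemma Plevel_atomOf (n : ℕ) (ω : Ω) :
    Plevel f hfin P₁ n (atomOf f n ω) = pAtom f P₁ n ω := by
  classical
  rw [Plevel]
  rw [show ((reps f hfin n).filter (· ∈ atomOf f n ω)) = {rep f n ω} from
    filter_atomOf_eq n ω]
  rw [Finset.sum_singleton, pAtom_congr P₁ (rep_mem_atomOf n ω)]

open Classical in
lemma filter_subatom_not_split {n : ℕ} {ω : Ω} (h : ¬ Split f n ω) :
    (reps f hfin (n + 1)).filter (· ∈ atomOf f n ω) = {rep f (n + 1) ω} := by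
  have h' : ∀ ω' ∈ atomOf f n ω, f (n + 1) ω' = f (n + 1) ω := by
    intro ω' hω'
    by_contra hc
    exact h ⟨ω', hω', hc⟩
  ext r
  simp only [Finset.mem_filter, Finset.mem_singleton]
  constructor
  · rintro ⟨hr, hmem⟩
    exact reps_eq_rep hr (mem_atomOf_succ hmem (h' r hmem))
  · rintro rfl
    exact ⟨rep_mem_reps hfin _ ω,
      atomOf_succ_subset f n ω (rep_mem_atomOf (n + 1) ω)⟩

open Classical in
lemma filter_subatom_split
    (htwo : ∀ n (ω : Ω), ∃ v₁ v₂ : ℝ, ∀ ω' ∈ atomOf f n ω,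
      f (n + 1) ω' = v₁ ∨ f (n + 1) ω' = v₂)
    {n : ℕ} {ω : Ω} (h : Split f n ω) :
    (reps f hfin (n + 1)).filter (· ∈ atomOf f n ω) =
      {rep f (n + 1) ω, rep f (n + 1) h.choose} := by
  have hatom : atomOf f n h.choose = atomOf f n ω := atomOf_eq_of_mem h.choose_spec.1
  ext r
  simp only [Finset.mem_filter, Finset.mem_insert, Finset.mem_singleton]
  constructor
  · rintro ⟨hr, hmem⟩
    rcases two_values htwo h r hmem with hv | hv
    · exact Or.inl (reps_eq_rep hr (mem_atomOf_succ hmem hv))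
    · refine Or.inr (reps_eq_rep hr (mem_atomOf_succ ?_ hv))
      rw [hatom]; exact hmem
  · rintro (rfl | rfl)
    · exact ⟨rep_mem_reps hfin _ ω,
        atomOf_succ_subset f n ω (rep_mem_atomOf (n + 1) ω)⟩
    · refine ⟨rep_mem_reps hfin _ h.choose, ?_⟩
      have hsub := atomOf_succ_subset f n h.choose (rep_mem_atomOf (n + 1) h.choose)
      exact fun j hj => (hsub j hj).trans (h.choose_spec.1 j hj)

lemma rep_succ_ne_of_split {n : ℕ} {ω : Ω} (h : Split f n ω) :
    rep f (n + 1) ω ≠ rep f (n + 1) h.choose := by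
  intro hc
  apply h.choose_spec.2
  rw [← f_rep_succ (f := f) n h.choose, ← hc, f_rep_succ (f := f) n ω]

open Classical in
lemma sum_pAtom_subatoms
    (htwo : ∀ n (ω : Ω), ∃ v₁ v₂ : ℝ, ∀ ω' ∈ atomOf f n ω,
      f (n + 1) ω' = v₁ ∨ f (n + 1) ω' = v₂)
    (n : ℕ) (ω : Ω) :
    ∑ r ∈ (reps f hfin (n + 1)).filter (· ∈ atomOf f n ω),
      pAtom f P₁ (n + 1) r = pAtom f P₁ n ω := by
  by_cases h : Split f n ω
  · rw [filter_subatom_split htwo h, Finset.sum_pair (rep_succ_ne_of_split h),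
      pAtom_congr P₁ (rep_mem_atomOf (n + 1) ω),
      pAtom_congr P₁ (rep_mem_atomOf (n + 1) h.choose),
      pAtom_of_split P₁ h, pAtom_choose_of_split htwo P₁ h]
    have hne : f (n + 1) ω - f (n + 1) h.choose ≠ 0 :=
      sub_ne_zero.mpr (fun hc => h.choose_spec.2 hc.symm)
    have hne' : f (n + 1) h.choose - f (n + 1) ω ≠ 0 :=
      sub_ne_zero.mpr h.choose_spec.2
    field_simp
    ring
  · rw [filter_subatom_not_split h, Finset.sum_singleton,
      pAtom_congr P₁ (rep_mem_atomOf (n + 1) ω), pAtom_of_not_split P₁ h]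

end MFM

namespace MFM
variable {Ω : Type*} [Nonempty Ω] {f : ℕ → Ω → ℝ}
  {hfin : ∀ n, (Set.range (f n)).Finite} {P₁ : Set Ω → ℝ}

open Classical in
lemma Plevel_succ
    (htwo : ∀ n (ω : Ω), ∃ v₁ v₂ : ℝ, ∀ ω' ∈ atomOf f n ω,
      f (n + 1) ω' = v₁ ∨ f (n + 1) ω' = v₂)
    {n : ℕ} {A : Set Ω} (hA : A ∈ algLevel f n) :
    Plevel f hfin P₁ (n + 1) A = Plevel f hfin P₁ n A := by
  classical
  unfold Plevel
  have hmaps : ∀ r ∈ (reps f hfin (n + 1)).filter (· ∈ A),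
      rep f n r ∈ (reps f hfin n).filter (· ∈ A) := by
    intro r hr
    rw [Finset.mem_filter] at hr ⊢
    refine ⟨rep_mem_reps hfin n r, ?_⟩
    exact hA r hr.2 (rep_mem_atomOf n r)
  rw [← Finset.sum_fiberwise_of_maps_to hmaps (pAtom f P₁ (n + 1))]
  apply Finset.sum_congr rfl
  intro s hs
  rw [Finset.mem_filter] at hs
  have hfil : ((reps f hfin (n + 1)).filter (· ∈ A)).filter (fun r => rep f n r = s)
      = (reps f hfin (n + 1)).filter (· ∈ atomOf f n s) := by
    ext r
    simp only [Finset.mem_filter, and_assoc]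
    constructor
    · rintro ⟨hr, -, hrep⟩
      refine ⟨hr, ?_⟩
      have : r ∈ atomOf f n (rep f n r) := by
        rw [atomOf_rep]; exact mem_atomOf_self f n r
      rwa [hrep] at this
    · rintro ⟨hr, hmem⟩
      refine ⟨hr, hA s hs.2 hmem, ?_⟩
      rw [rep_congr hmem, rep_eq_of_mem_reps hs.1]
  rw [hfil, sum_pAtom_subatoms htwo n s]

lemma Plevel_of_le
    (htwo : ∀ n (ω : Ω), ∃ v₁ v₂ : ℝ, ∀ ω' ∈ atomOf f n ω,
      f (n + 1) ω' = v₁ ∨ f (n + 1) ω' = v₂)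
    {n m : ℕ} (hnm : n ≤ m) {A : Set Ω} (hA : A ∈ algLevel f n) :
    Plevel f hfin P₁ m A = Plevel f hfin P₁ n A := by
  induction m, hnm using Nat.le_induction with
  | base => rfl
  | succ m hm ih =>
    rw [Plevel_succ htwo (algLevel_mono f hm hA), ih]

open Classical in
variable (f) in
/-- The measure on `𝒜_∞`. -/
noncomputable def Pmeas (hfin : ∀ n, (Set.range (f n)).Finite)
    (P₁ : Set Ω → ℝ) (A : Set Ω) : ℝ :=
  if h : ∃ n, A ∈ algLevel f n then Plevel f hfin P₁ (Nat.find h) A else 0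

lemma Pmeas_eq
    (htwo : ∀ n (ω : Ω), ∃ v₁ v₂ : ℝ, ∀ ω' ∈ atomOf f n ω,
      f (n + 1) ω' = v₁ ∨ f (n + 1) ω' = v₂)
    {n : ℕ} {A : Set Ω} (hA : A ∈ algLevel f n) :
    Pmeas f hfin P₁ A = Plevel f hfin P₁ n A := by
  classical
  have h : ∃ n, A ∈ algLevel f n := ⟨n, hA⟩
  rw [Pmeas, dif_pos h]
  have h1 : Nat.find h ≤ n := Nat.find_le hA
  rw [Plevel_of_le htwo h1 (Nat.find_spec h)]

end MFM

namespace MFM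
variable {Ω : Type*} [Nonempty Ω] {f : ℕ → Ω → ℝ}
  {hfin : ∀ n, (Set.range (f n)).Finite} {P₁ : Set Ω → ℝ}

lemma mem_algInf {n : ℕ} {A : Set Ω} (hA : A ∈ algLevel f n) : A ∈ algInf f :=
  Set.mem_iUnion.mpr ⟨n, hA⟩

open Classical in
/-- Any finitely additive set function decomposes over atoms. -/
lemma decomp (hfin : ∀ n, (Set.range (f n)).Finite) {m : ℕ} (Q : Set Ω → ℝ)
    (hQ0 : Q ∅ = 0)
    (hQadd : ∀ A ∈ algLevel f m, ∀ B ∈ algLevel f m, Disjoint A B →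
      Q (A ∪ B) = Q A + Q B)
    {A : Set Ω} (hA : A ∈ algLevel f m) :
    Q A = ∑ r ∈ (reps f hfin m).filter (· ∈ A), Q (atomOf f m r) := by
  classical
  suffices H : ∀ (s : Finset Ω) (A : Set Ω), A ∈ algLevel f m →
      (reps f hfin m).filter (· ∈ A) = s → Q A = ∑ r ∈ s, Q (atomOf f m r) from
    H _ A hA rfl
  intro s
  induction s using Finset.strongInduction with
  | _ s ih =>
    intro A hA hfil
    rcases Finset.eq_empty_or_nonempty s with rfl | ⟨a, ha⟩
    · have hAempty : A = ∅ := by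
        rw [Set.eq_empty_iff_forall_notMem]
        intro ω hω
        have h1 : rep f m ω ∈ (reps f hfin m).filter (· ∈ A) := by
          rw [Finset.mem_filter]
          exact ⟨rep_mem_reps hfin m ω, hA ω hω (rep_mem_atomOf m ω)⟩
        rw [hfil] at h1
        exact Finset.notMem_empty _ h1
      rw [hAempty, hQ0, Finset.sum_empty]
    · have haf : a ∈ (reps f hfin m).filter (· ∈ A) := hfil ▸ ha
      rw [Finset.mem_filter] at haf
      obtain ⟨hareps, haA⟩ := haf
      have hsub : atomOf f m a ⊆ A := hA a haA
      have hA' : A \ atomOf f m a ∈ algLevel f m :=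
        diff_mem_algLevel f hA (atomOf_mem_algLevel f m a)
      have hfil' : @Finset.filter Ω (· ∈ A \ atomOf f m a)
          (fun x => Classical.propDecidable _) (reps f hfin m) = s.erase a := by
        ext x
        simp only [Finset.mem_filter, Finset.mem_erase, Set.mem_diff]
        constructor
        · rintro ⟨hx, hxA, hxa⟩
          refine ⟨fun hc => hxa (hc ▸ mem_atomOf_self f m a), ?_⟩
          rw [← hfil, Finset.mem_filter]
          exact ⟨hx, hxA⟩
        · rintro ⟨hxa, hxs⟩
          rw [← hfil, Finset.mem_filter] at hxs
          refine ⟨hxs.1, hxs.2, fun hc => hxa ?_⟩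
          rw [reps_eq_rep hxs.1 hc, rep_eq_of_mem_reps hareps]
      have hunion : A = atomOf f m a ∪ (A \ atomOf f m a) :=
        (Set.union_diff_cancel hsub).symm
      have hdisj : Disjoint (atomOf f m a) (A \ atomOf f m a) :=
        disjoint_sdiff_self_right
      rw [hunion, hQadd _ (atomOf_mem_algLevel f m a) _ hA' hdisj,
        ih (s.erase a) (Finset.erase_ssubset ha) _ hA' hfil',
        ← Finset.add_sum_erase _ _ ha]

lemma Plevel_nonneg (hmfm : IsMeasureFreeMartingale f)
    (htwo : ∀ n (ω : Ω), ∃ v₁ v₂ : ℝ, ∀ ω' ∈ atomOf f n ω,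
      f (n + 1) ω' = v₁ ∨ f (n + 1) ω' = v₂)
    (hP₁ : ∀ A ∈ algLevel f 0, 0 ≤ P₁ A) (n : ℕ) (A : Set Ω) :
    0 ≤ Plevel f hfin P₁ n A :=
  Finset.sum_nonneg fun r _ => pAtom_nonneg hmfm htwo hP₁ n r

lemma Plevel_zero_eq (hP₁ : IsFAProb (algLevel f 0) P₁) {A : Set Ω}
    (hA : A ∈ algLevel f 0) : Plevel f hfin P₁ 0 A = P₁ A := by
  classical
  rw [Plevel, decomp hfin P₁ hP₁.2.1 hP₁.2.2.2 hA]
  apply Finset.sum_congr rfl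
  intro r _
  simp [pAtom]

lemma Plevel_empty (n : ℕ) : Plevel f hfin P₁ n (∅ : Set Ω) = 0 := by
  classical
  rw [Plevel]
  simp

end MFM

namespace MFM
variable {Ω : Type*} [Nonempty Ω] {f : ℕ → Ω → ℝ}
  {hfin : ∀ n, (Set.range (f n)).Finite} {P₁ : Set Ω → ℝ}

lemma atomOf_succ_eq_inter (n : ℕ) (ω : Ω) :
    atomOf f (n + 1) ω = atomOf f n ω ∩ f (n + 1) ⁻¹' {f (n + 1) ω} := by
  ext x
  constructor
  · intro hx
    exact ⟨atomOf_succ_subset f n ω hx, hx (n + 1) le_rfl⟩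
  · rintro ⟨h1, h2⟩
    exact mem_atomOf_succ h1 h2

lemma inter_preimage_mem_algLevel (n : ℕ) (ω : Ω) (v : ℝ) :
    atomOf f n ω ∩ f (n + 1) ⁻¹' {v} ∈ algLevel f (n + 1) := by
  rintro x ⟨hx1, hx2⟩ y hy
  have hyx : y ∈ atomOf f n x := atomOf_succ_subset f n x hy
  constructor
  · exact fun j hj => (hyx j hj).trans (hx1 j hj)
  · have : f (n + 1) y = f (n + 1) x := hy (n + 1) le_rfl
    rw [Set.mem_preimage, this]
    exact hx2

variable (htwo : ∀ n (ω : Ω), ∃ v₁ v₂ : ℝ, ∀ ω' ∈ atomOf f n ω,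
      f (n + 1) ω' = v₁ ∨ f (n + 1) ω' = v₂)

include htwo in
lemma Pmeas_empty : Pmeas f hfin P₁ (∅ : Set Ω) = 0 := by
  rw [Pmeas_eq htwo (empty_mem_algLevel f 0), Plevel_empty]

include htwo in
lemma Pmeas_univ (hP₁ : IsFAProb (algLevel f 0) P₁) :
    Pmeas f hfin P₁ (Set.univ : Set Ω) = 1 := by
  rw [Pmeas_eq htwo (univ_mem_algLevel f 0),
    Plevel_zero_eq hP₁ (univ_mem_algLevel f 0), hP₁.2.2.1]

include htwo in
lemma Pmeas_nonneg (hmfm : IsMeasureFreeMartingale f)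
    (hP₁ : ∀ A ∈ algLevel f 0, 0 ≤ P₁ A) {A : Set Ω} (hA : A ∈ algInf f) :
    0 ≤ Pmeas f hfin P₁ A := by
  obtain ⟨n, hn⟩ := Set.mem_iUnion.mp hA
  rw [Pmeas_eq htwo hn]
  exact Plevel_nonneg hmfm htwo hP₁ n A

include htwo in
lemma Pmeas_add {A B : Set Ω} (hA : A ∈ algInf f) (hB : B ∈ algInf f)
    (hAB : Disjoint A B) :
    Pmeas f hfin P₁ (A ∪ B) = Pmeas f hfin P₁ A + Pmeas f hfin P₁ B := by
  classical
  obtain ⟨n, hn⟩ := Set.mem_iUnion.mp hA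
  obtain ⟨m, hm⟩ := Set.mem_iUnion.mp hB
  have hn' : A ∈ algLevel f (max n m) := algLevel_mono f (le_max_left n m) hn
  have hm' : B ∈ algLevel f (max n m) := algLevel_mono f (le_max_right n m) hm
  rw [Pmeas_eq htwo (union_mem_algLevel f hn' hm'), Pmeas_eq htwo hn',
    Pmeas_eq htwo hm']
  unfold Plevel
  rw [← Finset.sum_union]
  · apply Finset.sum_congr _ (fun _ _ => rfl)
    ext r
    simp only [Finset.mem_filter, Finset.mem_union, Set.mem_union]
    tauto
  · rw [Finset.disjoint_left]
    intro r hr hr'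
    rw [Finset.mem_filter] at hr hr'
    exact Set.disjoint_left.mp hAB hr.2 hr'.2

include htwo in
lemma Pmeas_atomOf (n : ℕ) (ω : Ω) :
    Pmeas f hfin P₁ (atomOf f n ω) = pAtom f P₁ n ω := by
  rw [Pmeas_eq htwo (atomOf_mem_algLevel f n ω), Plevel_atomOf]

end MFM

namespace MFM
variable {Ω : Type*} [Nonempty Ω] {f : ℕ → Ω → ℝ}
  {hfin : ∀ n, (Set.range (f n)).Finite} {P₁ : Set Ω → ℝ}

variable (htwo : ∀ n (ω : Ω), ∃ v₁ v₂ : ℝ, ∀ ω' ∈ atomOf f n ω,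
      f (n + 1) ω' = v₁ ∨ f (n + 1) ω' = v₂)

include htwo in
lemma Pmeas_martingale (hmfm : IsMeasureFreeMartingale f) (n : ℕ) (ω : Ω) :
    ∑ v ∈ (hfin (n + 1)).toFinset,
      v * Pmeas f hfin P₁ (atomOf f n ω ∩ f (n + 1) ⁻¹' {v}) =
      f n ω * Pmeas f hfin P₁ (atomOf f n ω) := by
  classical
  rw [Pmeas_atomOf htwo]
  by_cases h : Split f n ω
  · -- split case
    have hne : f (n + 1) ω ≠ f (n + 1) h.choose :=
      fun hc => h.choose_spec.2 hc.symm
    have hsub : ({f (n + 1) ω, f (n + 1) h.choose} : Finset ℝ) ⊆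
        (hfin (n + 1)).toFinset := by
      intro u hu
      rw [Finset.mem_insert, Finset.mem_singleton] at hu
      rcases hu with rfl | rfl
      · exact (hfin (n + 1)).mem_toFinset.mpr ⟨ω, rfl⟩
      · exact (hfin (n + 1)).mem_toFinset.mpr ⟨h.choose, rfl⟩
    have hzero : ∀ u ∈ (hfin (n + 1)).toFinset,
        u ∉ ({f (n + 1) ω, f (n + 1) h.choose} : Finset ℝ) →
        u * Pmeas f hfin P₁ (atomOf f n ω ∩ f (n + 1) ⁻¹' {u}) = 0 := by
      intro u _ hu
      rw [Finset.mem_insert, Finset.mem_singleton] at hu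
      push_neg at hu
      have hempty : atomOf f n ω ∩ f (n + 1) ⁻¹' {u} = ∅ := by
        rw [Set.eq_empty_iff_forall_notMem]
        rintro x ⟨hx1, hx2⟩
        rw [Set.mem_preimage, Set.mem_singleton_iff] at hx2
        rcases two_values htwo h x hx1 with hv | hv
        · exact hu.1 (hx2.symm.trans hv)
        · exact hu.2 (hx2.symm.trans hv)
      rw [hempty, Pmeas_empty htwo, mul_zero]
    rw [← Finset.sum_subset hsub hzero, Finset.sum_pair hne]
    have e1 : atomOf f n ω ∩ f (n + 1) ⁻¹' {f (n + 1) ω} = atomOf f (n + 1) ω :=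
      (atomOf_succ_eq_inter n ω).symm
    have e2 : atomOf f n ω ∩ f (n + 1) ⁻¹' {f (n + 1) h.choose} =
        atomOf f (n + 1) h.choose := by
      rw [atomOf_succ_eq_inter n h.choose, atomOf_eq_of_mem h.choose_spec.1]
    rw [e1, e2, Pmeas_atomOf htwo, Pmeas_atomOf htwo, pAtom_of_split P₁ h,
      pAtom_choose_of_split htwo P₁ h]
    have hne1 : f (n + 1) ω - f (n + 1) h.choose ≠ 0 := sub_ne_zero.mpr hne
    have hne2 : f (n + 1) h.choose - f (n + 1) ω ≠ 0 :=
      sub_ne_zero.mpr h.choose_spec.2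
    field_simp
    ring
  · -- no split case
    have hconst : ∀ ω' ∈ atomOf f n ω, f (n + 1) ω' = f (n + 1) ω := by
      intro ω' hω'
      by_contra hc
      exact h ⟨ω', hω', hc⟩
    have hval : f (n + 1) ω = f n ω := by
      obtain ⟨⟨ω₁, hω₁, hle⟩, ⟨ω₂, hω₂, hge⟩⟩ := hmfm n ω
      have h1 := hconst ω₁ hω₁
      have h2 := hconst ω₂ hω₂
      linarith [h1 ▸ hle, h2 ▸ hge]
    rw [Finset.sum_eq_single_of_mem (f (n + 1) ω)
      ((hfin (n + 1)).mem_toFinset.mpr ⟨ω, rfl⟩)]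
    · rw [← atomOf_succ_eq_inter, Pmeas_atomOf htwo, pAtom_of_not_split P₁ h,
        hval]
    · intro u _ hu
      have hempty : atomOf f n ω ∩ f (n + 1) ⁻¹' {u} = ∅ := by
        rw [Set.eq_empty_iff_forall_notMem]
        rintro x ⟨hx1, hx2⟩
        rw [Set.mem_preimage, Set.mem_singleton_iff] at hx2
        exact hu (hx2.symm.trans (hconst x hx1))
      rw [hempty, Pmeas_empty htwo, mul_zero]

end MFM

namespace MFM
variable {Ω : Type*} [Nonempty Ω] {f : ℕ → Ω → ℝ}
  {hfin : ∀ n, (Set.range (f n)).Finite} {P₁ : Set Ω → ℝ}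

variable (htwo : ∀ n (ω : Ω), ∃ v₁ v₂ : ℝ, ∀ ω' ∈ atomOf f n ω,
      f (n + 1) ω' = v₁ ∨ f (n + 1) ω' = v₂)

include htwo in
lemma uniq_atom {P' : Set Ω → ℝ} (hP' : IsFAProb (algInf f) P')
    (hP'ext : ∀ A ∈ algLevel f 0, P' A = P₁ A)
    (hP'mart : ∀ n (ω : Ω), ∑ v ∈ (hfin (n + 1)).toFinset,
      v * P' (atomOf f n ω ∩ f (n + 1) ⁻¹' {v}) = f n ω * P' (atomOf f n ω)) :
    ∀ n (ω : Ω), P' (atomOf f n ω) = pAtom f P₁ n ω := by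
  intro n
  induction n with
  | zero =>
    intro ω
    rw [hP'ext _ (atomOf_mem_algLevel f 0 ω)]
    simp [pAtom]
  | succ n ih =>
    intro ω
    by_cases h : Split f n ω
    · -- split case
      set v := f (n + 1) ω with hv
      set v' := f (n + 1) h.choose with hv'
      set c := f n ω with hc
      have hne : v ≠ v' := fun hc' => h.choose_spec.2 hc'.symm
      set A₁ := atomOf f n ω ∩ f (n + 1) ⁻¹' {v} with hA₁
      set A₂ := atomOf f n ω ∩ f (n + 1) ⁻¹' {v'} with hA₂
      have hA₁m : A₁ ∈ algInf f := mem_algInf (inter_preimage_mem_algLevel n ω v)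
      have hA₂m : A₂ ∈ algInf f := mem_algInf (inter_preimage_mem_algLevel n ω v')
      have hunion : A₁ ∪ A₂ = atomOf f n ω := by
        ext x
        constructor
        · rintro (⟨h1, -⟩ | ⟨h1, -⟩) <;> exact h1
        · intro hx
          rcases two_values htwo h x hx with hval | hval
          · exact Or.inl ⟨hx, hval⟩
          · exact Or.inr ⟨hx, hval⟩
      have hdisj : Disjoint A₁ A₂ := by
        rw [Set.disjoint_left]
        rintro x ⟨-, hx1⟩ ⟨-, hx2⟩
        rw [Set.mem_preimage, Set.mem_singleton_iff] at hx1 hx2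
        exact hne (hx1.symm.trans hx2)
      have haddp : pAtom f P₁ n ω = P' A₁ + P' A₂ := by
        rw [← ih ω, ← hunion]
        exact hP'.2.2.2 A₁ hA₁m A₂ hA₂m hdisj
      -- reduce the martingale sum to the two values
      have hsub : ({v, v'} : Finset ℝ) ⊆ (hfin (n + 1)).toFinset := by
        intro u hu
        rw [Finset.mem_insert, Finset.mem_singleton] at hu
        rcases hu with rfl | rfl
        · exact (hfin (n + 1)).mem_toFinset.mpr ⟨ω, rfl⟩
        · exact (hfin (n + 1)).mem_toFinset.mpr ⟨h.choose, rfl⟩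
      have hzero : ∀ u ∈ (hfin (n + 1)).toFinset, u ∉ ({v, v'} : Finset ℝ) →
          u * P' (atomOf f n ω ∩ f (n + 1) ⁻¹' {u}) = 0 := by
        intro u _ hu
        rw [Finset.mem_insert, Finset.mem_singleton] at hu
        push_neg at hu
        have hempty : atomOf f n ω ∩ f (n + 1) ⁻¹' {u} = ∅ := by
          rw [Set.eq_empty_iff_forall_notMem]
          rintro x ⟨hx1, hx2⟩
          rw [Set.mem_preimage, Set.mem_singleton_iff] at hx2
          rcases two_values htwo h x hx1 with hval | hval
          · exact hu.1 (hx2.symm.trans hval)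
          · exact hu.2 (hx2.symm.trans hval)
        rw [hempty, hP'.2.1, mul_zero]
      have hmart2 : v * P' A₁ + v' * P' A₂ = c * pAtom f P₁ n ω := by
        have := hP'mart n ω
        rw [← Finset.sum_subset hsub hzero, Finset.sum_pair hne] at this
        rw [this, ih ω]
      have hne1 : v - v' ≠ 0 := sub_ne_zero.mpr hne
      rw [atomOf_succ_eq_inter, ← hv, ← hA₁, pAtom_of_split P₁ h, ← hv', ← hv,
        ← hc, mul_div_assoc', eq_div_iff hne1]
      linear_combination hmart2 + v' * haddp
    · -- no split case
      have hconst : ∀ ω' ∈ atomOf f n ω, f (n + 1) ω' = f (n + 1) ω := by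
        intro ω' hω'
        by_contra hcon
        exact h ⟨ω', hω', hcon⟩
      have heq : atomOf f (n + 1) ω = atomOf f n ω := by
        rw [atomOf_succ_eq_inter]
        apply Set.inter_eq_self_of_subset_left
        intro x hx
        rw [Set.mem_preimage, Set.mem_singleton_iff]
        exact hconst x hx
      rw [heq, ih ω, pAtom_of_not_split P₁ h]

end MFM


open MFM in
/-- If every atom of `ℚₙ` splits into at most two atoms of `ℚₙ₊₁`, then given a
probability measure `P₁` on `𝒜₁` with all atoms of positive measure, there is a
unique finitely additive probability measure on `𝒜_∞` extending `P₁` under which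
the measure free martingale is a martingale. -/
theorem martingale_measure_unique_binary {Ω : Type*} [Nonempty Ω]
    (f : ℕ → Ω → ℝ) (hfin : ∀ n, (Set.range (f n)).Finite)
    (hmfm : IsMeasureFreeMartingale f)
    (htwo : ∀ n (ω : Ω), ∃ v₁ v₂ : ℝ, ∀ ω' ∈ atomOf f n ω,
      f (n + 1) ω' = v₁ ∨ f (n + 1) ω' = v₂)
    (P₁ : Set Ω → ℝ) (hP₁ : IsFAProb (algLevel f 0) P₁)
    (hpos : ∀ ω : Ω, 0 < P₁ (atomOf f 0 ω)) :
    ∃ P : Set Ω → ℝ,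
      (IsFAProb (algInf f) P ∧ (∀ A ∈ algLevel f 0, P A = P₁ A) ∧
        ∀ n (ω : Ω), ∑ v ∈ (hfin (n + 1)).toFinset,
        v * P (atomOf f n ω ∩ f (n + 1) ⁻¹' {v}) = f n ω * P (atomOf f n ω)) ∧
      ∀ P' : Set Ω → ℝ,
        (IsFAProb (algInf f) P' ∧ (∀ A ∈ algLevel f 0, P' A = P₁ A) ∧
          ∀ n (ω : Ω), ∑ v ∈ (hfin (n + 1)).toFinset,
            v * P' (atomOf f n ω ∩ f (n + 1) ⁻¹' {v}) =
              f n ω * P' (atomOf f n ω)) →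
        ∀ A ∈ algInf f, P' A = P A := by
  classical
  refine ⟨Pmeas f hfin P₁, ⟨⟨fun A hA => Pmeas_nonneg htwo hmfm hP₁.1 hA,
    Pmeas_empty htwo, Pmeas_univ htwo hP₁,
    fun A hA B hB hd => Pmeas_add htwo hA hB hd⟩,
    fun A hA => by rw [Pmeas_eq htwo hA, Plevel_zero_eq hP₁ hA],
    Pmeas_martingale htwo hmfm⟩, ?_⟩
  rintro P' ⟨hP'1, hP'2, hP'3⟩ A hA
  obtain ⟨m, hm⟩ := Set.mem_iUnion.mp hA
  rw [Pmeas_eq htwo hm,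
    decomp hfin P' hP'1.2.1
      (fun A hA B hB hd => hP'1.2.2.2 A (mem_algInf hA) B (mem_algInf hB) hd) hm]
  unfold Plevel
  exact Finset.sum_congr rfl fun r _ => uniq_atom htwo hP'1 hP'2 hP'3 m r
end

section
/- Let Ω be a compact metric space and (f_n) an equicontinuous sequence of continuous real-valued functions on Ω, each with finite range, such that (f_n) is a measure free martingale with respect to the partitions ℚ_n generated by f_1,...,f_n, and suppose the common refinement of all ℚ_n consists of singleton sets. Then (f_n) converges pointwise on Ω. -/
open Filter

/-- An equicontinuous measure free martingale of continuous finite-range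
functions on a compact metric space, whose generated partitions separate
points, converges pointwise. -/
theorem equicontinuous_measure_free_martingale_converges {Ω : Type*}
    [MetricSpace Ω] [CompactSpace Ω] (f : ℕ → Ω → ℝ)
    (hcont : ∀ n, Continuous (f n)) (hfin : ∀ n, (Set.range (f n)).Finite)
    (hequi : Equicontinuous f) (hmfm : IsMeasureFreeMartingale f)
    (hsep : ∀ ω ω' : Ω, ω ≠ ω' → ∃ n, f n ω ≠ f n ω') :
    ∀ ω : Ω, ∃ L : ℝ, Tendsto (fun n => f n ω) atTop (nhds L) := by

  intro ω
  have hmem : ∀ n, ω ∈ atomOf f n ω := fun n j _ => rfl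
  have hsub : ∀ {n m : ℕ}, n ≤ m → ∀ {ω' : Ω}, ω' ∈ atomOf f n ω →
      atomOf f m ω' ⊆ atomOf f n ω := by
    intro n m hnm ω' hω' x hx j hj
    exact (hx j (hj.trans hnm)).trans (hω' j hj)
  have hanti : ∀ {n m : ℕ}, n ≤ m → atomOf f m ω ⊆ atomOf f n ω := by
    intro n m hnm x hx j hj
    exact hx j (hj.trans hnm)
  have bracket : ∀ n m, n ≤ m →
      (∃ ω₁ ∈ atomOf f n ω, f m ω₁ ≤ f n ω) ∧
      (∃ ω₂ ∈ atomOf f n ω, f n ω ≤ f m ω₂) := by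
    intro n m hnm
    induction m, hnm using Nat.le_induction with
    | base => exact ⟨⟨ω, hmem n, le_refl _⟩, ⟨ω, hmem n, le_refl _⟩⟩
    | succ m hm ih =>
      obtain ⟨⟨ω₁, h₁, hle₁⟩, ⟨ω₂, h₂, hle₂⟩⟩ := ih
      obtain ⟨⟨ω₁', h₁', hle₁'⟩, -⟩ := hmfm m ω₁
      obtain ⟨-, ⟨ω₂', h₂', hle₂'⟩⟩ := hmfm m ω₂
      exact ⟨⟨ω₁', hsub hm h₁ h₁', hle₁'.trans hle₁⟩,
             ⟨ω₂', hsub hm h₂ h₂', hle₂.trans hle₂'⟩⟩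
  have hclosed : ∀ n, IsClosed (atomOf f n ω) := by
    intro n
    have : atomOf f n ω = ⋂ j ∈ Finset.range (n + 1), (f j) ⁻¹' {f j ω} := by
      ext x
      simp [atomOf, Nat.lt_succ_iff]
    rw [this]
    exact isClosed_biInter fun j _ => isClosed_singleton.preimage (hcont j)
  have hinter : (⋂ n, atomOf f n ω) = {ω} := by
    apply Set.eq_singleton_iff_unique_mem.mpr
    constructor
    · exact Set.mem_iInter.mpr fun n => hmem n
    · intro x hx
      by_contra hne
      obtain ⟨n, hn⟩ := hsep x ω hne
      exact hn ((Set.mem_iInter.mp hx n) n le_rfl)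
  -- atoms eventually fit in any ball around ω
  have hshrink : ∀ δ > 0, ∃ N, atomOf f N ω ⊆ Metric.ball ω δ := by
    intro δ hδ
    have hs : IsCompact ((Metric.ball ω δ)ᶜ) :=
      (Metric.isOpen_ball.isClosed_compl).isCompact
    have hempty : ((Metric.ball ω δ)ᶜ ∩ ⋂ n, atomOf f n ω) = ∅ := by
      rw [hinter]
      ext x
      simp only [Set.mem_inter_iff, Set.mem_compl_iff, Set.mem_singleton_iff,
        Set.mem_empty_iff_false, iff_false, not_and]
      rintro hx rfl
      exact hx (Metric.mem_ball_self hδ)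
    obtain ⟨t, ht⟩ := hs.elim_finite_subfamily_closed (atomOf f · ω) hclosed hempty
    refine ⟨t.sup id, fun x hx => ?_⟩
    by_contra hxb
    have : x ∈ (Metric.ball ω δ)ᶜ ∩ ⋂ n ∈ t, atomOf f n ω :=
      ⟨hxb, Set.mem_iInter₂.mpr fun n hn => hanti (Finset.le_sup (f := id) hn) hx⟩
    rw [ht] at this
    exact this
  have hC : CauchySeq (fun n => f n ω) := by
    rw [Metric.cauchySeq_iff']
    intro ε hε
    obtain ⟨δ, hδ, hδε⟩ := (Metric.equicontinuousAt_iff.mp (hequi ω)) ε hε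
    obtain ⟨N, hN⟩ := hshrink δ hδ
    refine ⟨N, fun m hm => ?_⟩
    obtain ⟨⟨ω₁, h₁, hle₁⟩, ⟨ω₂, h₂, hle₂⟩⟩ := bracket N m hm
    have hd₁ : dist (f m ω₁) (f m ω) < ε := by
      have := hδε ω₁ (by simpa [dist_comm] using hN h₁) m
      simpa [dist_comm] using this
    have hd₂ : dist (f m ω₂) (f m ω) < ε := by
      have := hδε ω₂ (by simpa [dist_comm] using hN h₂) m
      simpa [dist_comm] using this
    rw [Real.dist_eq, abs_sub_lt_iff]
    rw [Real.dist_eq, abs_sub_lt_iff] at hd₁ hd₂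
    constructor
    · linarith [hd₂.1]
    · linarith [hd₁.2]
  exact cauchySeq_tendsto_of_complete hC
end
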